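/- In the lifted TASEP, any move sequence from configuration A (particles at 1,...,N, pointer at site 1) to configuration B (particles at L−N+1,...,L, pointer at site L−1) requires at least N(L−N) + 2N − 3 moves: N(L−N) moves for mass transport (each move displaces at most one particle by one unit), plus N−1 initial pointer-relaying moves out of A and N−2 final pointer-relaying moves into B, all disjoint. -/

import Mathlib

/- The potential `sumPos` grows by at most one per move and by `N (L - N)` from `A` to `B`;
the first `N - 1` and the last `N - 2` moves leave it unchanged, and these two stretches of the
path cannot overlap, since `A` and `B` have different potentials. -/

namespace Paper

/-- There is a path of exactly `n` moves of `step` from `x` to `y`. -/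
def Reaches {C : Type*} (step : C → C → Prop) (x y : C) (n : ℕ) : Prop :=
  ∃ f : ℕ → C, f 0 = x ∧ f n = y ∧ ∀ i < n, step (f i) (f (i + 1))

/-- Graph distance: minimal number of moves from `x` to `y`. -/
noncomputable def gdist {C : Type*} (step : C → C → Prop) (x y : C) : ℕ :=
  sInf {n | Reaches step x y n}

/-- Intermediate state of a lifted-TASEP move: the active particle at `c.2`
advances deterministically if unblocked, otherwise the activity passes to the
blocking particle. -/
def Inter {L : ℕ} (c : Finset (ZMod L) × ZMod L) : Finset (ZMod L) × ZMod L :=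
  if c.2 + 1 ∈ c.1 then (c.1, c.2 + 1) else (insert (c.2 + 1) (c.1.erase c.2), c.2 + 1)

/-- `r` is the particle of `s` immediately preceding position `q` (cyclically). -/
def IsPred {L : ℕ} (s : Finset (ZMod L)) (q r : ZMod L) : Prop :=
  ∃ k : ℕ, 0 < k ∧ r = q - (k : ZMod L) ∧ r ∈ s ∧
    ∀ j : ℕ, 0 < j → j < k → q - (j : ZMod L) ∉ s

/-- A lifted-TASEP move: deterministic advance, then either a forward move
(no further action) or a pullback move (activity to the preceding particle). -/
def LStep {L : ℕ} (c d : Finset (ZMod L) × ZMod L) : Prop :=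
  c.2 ∈ c.1 ∧ (d = Inter c ∨ (d.1 = (Inter c).1 ∧ IsPred (Inter c).1 (Inter c).2 d.2))

lemma le_add_sub_of_step_le {C : Type*} {step : C → C → Prop} (Φ : C → ℕ)
    (hΦ : ∀ c d, step c d → Φ d ≤ Φ c + 1) {f : ℕ → C} {n a b : ℕ}
    (hstep : ∀ i < n, step (f i) (f (i + 1))) (hab : a ≤ b) (hbn : b ≤ n) :
    Φ (f b) ≤ Φ (f a) + (b - a) := by
  induction b, hab using Nat.le_induction with
  | base => simp
  | succ b hab ih =>
    have := hΦ _ _ (hstep b (by omega))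
    have := ih (by omega)
    omega

lemma ZMod.val_add_one_cases {L : ℕ} [NeZero L] (y : ZMod L) :
    (y + 1).val = y.val + 1 ∨ (y.val = L - 1 ∧ (y + 1).val = 0) := by
  have hy := y.val_lt
  rcases Nat.lt_or_ge 1 L with hL | hL
  · have : Fact (1 < L) := ⟨hL⟩
    rw [ZMod.val_add, ZMod.val_one]
    rcases Nat.lt_or_ge (y.val + 1) L with h | h
    · exact Or.inl (Nat.mod_eq_of_lt h)
    · exact Or.inr ⟨by omega, by rw [show y.val + 1 = L by omega, Nat.mod_self]⟩
  · have := (y + 1).val_lt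
    omega

variable {L : ℕ}

/-- The sites `1, …, L` of the paper, relabelled `0, …, L - 1`. -/
def pos (x : ZMod L) : ℕ := (x - 1).val

def sumPos (s : Finset (ZMod L)) : ℕ := ∑ x ∈ s, pos x

def block (L m N : ℕ) : Finset (ZMod L) :=
  (Finset.range N).image fun j => ((m + 1 + j : ℕ) : ZMod L)

lemma pos_natCast_succ {k : ℕ} (hk : k < L) : pos ((k + 1 : ℕ) : ZMod L) = k := by
  rw [pos, Nat.cast_succ, add_sub_cancel_right, ZMod.val_natCast_of_lt hk]

lemma sumPos_block {m N : ℕ} (h : m + N ≤ L) :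
    sumPos (block L m N) = N * m + ∑ j ∈ Finset.range N, j := by
  have hpos : ∀ j ∈ Finset.range N, pos ((m + 1 + j : ℕ) : ZMod L) = m + j := fun j hj => by
    rw [Finset.mem_range] at hj
    rw [Nat.add_right_comm, pos_natCast_succ (by omega)]
  rw [sumPos, block, Finset.sum_image, Finset.sum_congr rfl hpos, Finset.sum_add_distrib,
    Finset.sum_const, Finset.card_range, smul_eq_mul]
  intro a ha b hb hab
  have := congrArg pos hab
  rw [hpos a ha, hpos b hb] at this
  omega

section Sites

variable [NeZero L]

lemma pos_lt (x : ZMod L) : pos x < L := ZMod.val_lt _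

lemma natCast_pos_add_one (x : ZMod L) : ((pos x + 1 : ℕ) : ZMod L) = x := by
  rw [pos, Nat.cast_succ, ZMod.natCast_zmod_val, sub_add_cancel]

lemma pos_zero : pos (0 : ZMod L) = L - 1 := by
  have h := pos_natCast_succ (L := L) (k := L - 1) (by have := NeZero.pos L; omega)
  rwa [Nat.sub_add_cancel (NeZero.pos L), ZMod.natCast_self] at h

lemma pos_add_one (x : ZMod L) :
    pos (x + 1) = pos x + 1 ∨ (pos x = L - 1 ∧ pos (x + 1) = 0) := by
  have h := ZMod.val_add_one_cases (x - 1)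
  rw [sub_add_cancel] at h
  simpa only [pos, add_sub_cancel_right] using h

lemma pos_add_one_le (x : ZMod L) : pos (x + 1) ≤ pos x + 1 := by
  rcases pos_add_one x with h | h <;> omega

lemma mem_block {m N : ℕ} (h : m + N ≤ L) {x : ZMod L} :
    x ∈ block L m N ↔ m ≤ pos x ∧ pos x < m + N := by
  constructor
  · intro hx
    obtain ⟨j, hj, rfl⟩ := Finset.mem_image.1 hx
    rw [Finset.mem_range] at hj
    rw [Nat.add_right_comm, pos_natCast_succ (by omega)]
    omega
  · rintro ⟨h1, h2⟩
    refine Finset.mem_image.2 ⟨pos x - m, Finset.mem_range.2 (by omega), ?_⟩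
    rw [show m + 1 + (pos x - m) = pos x + 1 by omega, natCast_pos_add_one]

/-- The sites `1, …, m` below the block are empty, so the search for the preceding particle
wraps around to site `L`. -/
lemma pos_of_isPred_block_bottom {m N : ℕ} (hm : 0 < m) (h : m + N = L) {q r : ZMod L}
    (hq : pos q = m) (hr : IsPred (block L m N) q r) : pos r = L - 1 := by
  obtain ⟨k, hk0, rfl, hrs, hgap⟩ := hr
  have hN : 0 < N := by have := (mem_block h.le).1 hrs; omega
  rw [← natCast_pos_add_one q, hq] at hrs hgap ⊢
  have hzero : ((m + 1 : ℕ) : ZMod L) - ((m + 1 : ℕ) : ZMod L) = 0 := sub_self _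
  rcases lt_trichotomy k (m + 1) with hk | rfl | hk
  · rw [show m + 1 = (m - k + 1) + k by omega, Nat.cast_add (m - k + 1) k, add_sub_cancel_right,
      mem_block h.le, pos_natCast_succ (by omega)] at hrs
    omega
  · rw [hzero, pos_zero]
  · have := hgap (m + 1) (by omega) hk
    rw [hzero, mem_block h.le, pos_zero] at this
    omega

end Sites

section Moves

variable {c d : Finset (ZMod L) × ZMod L}

lemma IsPred.eq_sub_one {s : Finset (ZMod L)} {q r : ZMod L} (h : IsPred s q r) (hq : q - 1 ∈ s) :
    r = q - 1 := by
  obtain ⟨k, hk0, rfl, -, hgap⟩ := h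
  rcases Nat.lt_or_ge 1 k with hk | hk
  · exact absurd (by simpa using hq) (hgap 1 one_pos hk)
  · rw [show k = 1 by omega, Nat.cast_one]

lemma LStep.of_blocked (h : LStep c d) (hb : c.2 + 1 ∈ c.1) :
    d.1 = c.1 ∧ (d.2 = c.2 + 1 ∨ d.2 = c.2) := by
  have hInter : Inter c = (c.1, c.2 + 1) := if_pos hb
  rcases h with ⟨hc, rfl | ⟨hd1, hd2⟩⟩
  · simp [hInter]
  · rw [hInter] at hd1 hd2
    exact ⟨hd1, Or.inr (by simpa using hd2.eq_sub_one (by simpa using hc))⟩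

lemma LStep.of_unblocked (h : LStep c d) (hb : c.2 + 1 ∉ c.1) :
    d.1 = insert (c.2 + 1) (c.1.erase c.2) ∧
      (d.2 = c.2 + 1 ∨ IsPred d.1 (c.2 + 1) d.2) := by
  have hInter : Inter c = (insert (c.2 + 1) (c.1.erase c.2), c.2 + 1) := if_neg hb
  rcases h with ⟨-, rfl | ⟨hd1, hd2⟩⟩
  · simp [hInter]
  · rw [hInter] at hd1 hd2
    exact ⟨hd1, Or.inr (hd1 ▸ hd2)⟩

lemma sumPos_le_of_lStep [NeZero L] (h : LStep c d) : sumPos d.1 ≤ sumPos c.1 + 1 := by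
  by_cases hb : c.2 + 1 ∈ c.1
  · rw [(h.of_blocked hb).1]
    omega
  · have hnot : c.2 + 1 ∉ c.1.erase c.2 := fun hx => hb (Finset.mem_of_mem_erase hx)
    have herase := Finset.sum_erase_add c.1 pos h.1
    have := pos_add_one_le c.2
    rw [(h.of_unblocked hb).1, sumPos, sumPos, Finset.sum_insert hnot]
    omega

/-- An unblocked move into the block advances its bottom particle, after which a forward move
leaves the activity at the bottom and a pullback sends it to site `L`. -/
lemma LStep.blocked_of_fst_eq_block [NeZero L] {N : ℕ} (hN : N < L) (h : LStep c d)
    (hs : d.1 = block L (L - N) N) (hlo : L - N < pos d.2) (hhi : pos d.2 ≤ L - 2) :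
    c.2 + 1 ∈ c.1 := by
  by_contra hb
  obtain ⟨hd1, hd2⟩ := h.of_unblocked hb
  have hmem : ∀ x, x ∈ d.1 ↔ L - N ≤ pos x := fun x => by
    have := pos_lt x
    rw [hs, mem_block (by omega)]
    omega
  have hvacated : c.2 ∉ d.1 := by
    rw [hd1, Finset.mem_insert, Finset.mem_erase]
    rintro (h | h)
    · have := congrArg pos h
      rcases pos_add_one c.2 with h' | h' <;> omega
    · exact h.1 rfl
  have hoccupied : c.2 + 1 ∈ d.1 := hd1 ▸ Finset.mem_insert_self _ _
  rw [hmem] at hvacated hoccupied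
  have hbottom : pos (c.2 + 1) = L - N := by
    rcases pos_add_one c.2 with h' | h' <;> omega
  rcases hd2 with hd2 | hd2
  · rw [hd2] at hlo
    omega
  · rw [hs] at hd2
    have := pos_of_isPred_block_bottom (by omega) (by omega) hbottom hd2
    omega

end Moves

section Paths

variable [NeZero L] {N n : ℕ} {f : ℕ → Finset (ZMod L) × ZMod L}

lemma fst_eq_block_of_start (hstep : ∀ i < n, LStep (f i) (f (i + 1))) (hNL : N ≤ L)
    (h0 : f 0 = (block L 0 N, ((1 : ℕ) : ZMod L))) :
    ∀ i ≤ N - 1, i ≤ n → (f i).1 = block L 0 N ∧ pos (f i).2 ≤ i := by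
  intro i
  induction i with
  | zero =>
    intro _ _
    rw [h0]
    exact ⟨rfl, (pos_natCast_succ (NeZero.pos L)).le⟩
  | succ i ih =>
    intro hi hin
    obtain ⟨hs, hp⟩ := ih (by omega) (by omega)
    have hb : (f i).2 + 1 ∈ (f i).1 := by
      rw [hs, mem_block (by omega)]
      rcases pos_add_one (f i).2 with h | h <;> omega
    obtain ⟨hd1, hd2 | hd2⟩ := (hstep i (by omega)).of_blocked hb
    · exact ⟨hd1.trans hs, hd2 ▸ (pos_add_one_le _).trans (by omega)⟩
    · exact ⟨hd1.trans hs, hd2 ▸ by omega⟩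

/-- The upper bound, keeping the activity off site `L`, is what
`LStep.blocked_of_fst_eq_block` needs. -/
lemma fst_eq_block_of_end (hstep : ∀ i < n, LStep (f i) (f (i + 1))) (hN : 1 < N) (hNL : N < L)
    (hn : f n = (block L (L - N) N, ((L - 1 : ℕ) : ZMod L))) :
    ∀ j ≤ N - 2, j ≤ n → (f (n - j)).1 = block L (L - N) N ∧
      L - 2 - j ≤ pos (f (n - j)).2 ∧ pos (f (n - j)).2 ≤ L - 2 := by
  intro j
  induction j with
  | zero =>
    intro _ _
    rw [Nat.sub_zero, hn, show L - 1 = L - 2 + 1 by omega, pos_natCast_succ (by omega)]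
    exact ⟨rfl, le_rfl, le_rfl⟩
  | succ j ih =>
    intro hj hjn
    obtain ⟨hs, hlo, hhi⟩ := ih (by omega) (by omega)
    have hmove := hstep (n - (j + 1)) (by omega)
    rw [show n - (j + 1) + 1 = n - j by omega] at hmove
    have hb := hmove.blocked_of_fst_eq_block hNL hs (by omega) hhi
    obtain ⟨hd1, hd2 | hd2⟩ := hmove.of_blocked hb
    · rw [hd2] at hlo hhi
      refine ⟨hd1 ▸ hs, ?_⟩
      rcases pos_add_one (f (n - (j + 1))).2 with h | h <;> omega
    · rw [hd2] at hlo hhi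
      exact ⟨hd1 ▸ hs, by omega, hhi⟩

end Paths

/-- any lifted-TASEP move sequence from `A` (particles at
`1,…,N`, pointer at site `1`) to `B` (particles at `L-N+1,…,L`, pointer at
site `L-1`) has length at least `N(L-N) + 2N - 3`. -/
theorem lifted_dist_A_B_lower_bound (N L : ℕ) (hN : 1 < N) (hNL : N < L) :
    ∀ n : ℕ, Reaches (LStep (L := L))
        (((Finset.range N).image fun j => ((j + 1 : ℕ) : ZMod L)),
          ((1 : ℕ) : ZMod L))
        (((Finset.range N).image fun j => ((L - N + 1 + j : ℕ) : ZMod L)),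
          ((L - 1 : ℕ) : ZMod L)) n →
      N * (L - N) + 2 * N - 3 ≤ n := by
  have : NeZero L := ⟨by omega⟩
  rintro n ⟨f, h0, hn, hstep⟩
  have hA : (Finset.range N).image (fun j => ((j + 1 : ℕ) : ZMod L)) = block L 0 N := by
    simp only [block, zero_add, Nat.add_comm 1]
  rw [hA] at h0
  have hfa := (fst_eq_block_of_start hstep hNL.le h0 (min (N - 1) (n - (N - 2))) (by omega)
    (by omega)).1
  have hfb := (fst_eq_block_of_end hstep hN hNL hn (min n (N - 2)) (by omega) (by omega)).1
  have hgrowth := le_add_sub_of_step_le (fun c => sumPos c.1) (fun _ _ => sumPos_le_of_lStep)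
    hstep (show min (N - 1) (n - (N - 2)) ≤ n - min n (N - 2) by omega) (by omega)
  rw [hfa, hfb, sumPos_block (by omega), sumPos_block (by omega)] at hgrowth
  have : 0 < N * (L - N) := Nat.mul_pos (by omega) (by omega)
  omega

end Paper
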